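/- Let L be an even unimodular lattice of rank 2n (e.g. H^{⊕11}, n=11) and d̃ a positive integer, b' an integer coprime to d̃. Then the Gauss sum Σ_{w ∈ L/d̃L} ζ_{d̃}^{-(b'/2)(w·w)} = d̃^n, where ζ_{d̃} = exp(2πi/d̃) and w·w is the (even-valued) quadratic form. -/

import Mathlib

open Complex Finset

/-- The hyperbolic bilinear form on `H^{⊕n}`, `H` having Gram matrix `[[0,1],[1,0]]`. -/
def hypB (n : ℕ) (x y : Fin (2 * n) → ℤ) : ℤ :=
  ∑ i : Fin n,
    (x ⟨2 * i.val, by have := i.isLt; omega⟩ * y ⟨2 * i.val + 1, by have := i.isLt; omega⟩ +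
     x ⟨2 * i.val + 1, by have := i.isLt; omega⟩ * y ⟨2 * i.val, by have := i.isLt; omega⟩)

/-- Integer lift of an element of `L/NL`. -/
def zlift {N : ℕ} (v : Fin (2 * 11) → ZMod N) : Fin (2 * 11) → ℤ := fun i => ((v i).val : ℤ)

/-- Integer lift of `v/a` for `v ∈ L/NL` with `v = a·ṽ` (componentwise integer division
of the canonical lift by `a`). -/
def zdiv {N : ℕ} (v : Fin (2 * 11) → ZMod N) (a : ℕ) : Fin (2 * 11) → ℤ :=
  fun i => ((v i).val : ℤ) / (a : ℤ)

/-- `eZ M x = exp(2πi x / M) = ζ_M^x`. -/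
noncomputable def eZ (M : ℕ) (x : ℤ) : ℂ :=
  Complex.exp (2 * (Real.pi : ℂ) * Complex.I * (x : ℂ) / (M : ℂ))

lemma eZ_zero (M : ℕ) : eZ M 0 = 1 := by simp [eZ]

lemma eZ_add (M : ℕ) (x y : ℤ) : eZ M (x + y) = eZ M x * eZ M y := by
  rw [eZ, eZ, eZ, ← Complex.exp_add]
  congr 1
  push_cast
  ring

lemma eZ_sum (M : ℕ) {ι : Type*} (s : Finset ι) (f : ι → ℤ) :
    eZ M (∑ i ∈ s, f i) = ∏ i ∈ s, eZ M (f i) := by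
  induction s using Finset.cons_induction with
  | empty => simp [eZ_zero]
  | cons a s ha ih => rw [Finset.sum_cons, Finset.prod_cons, eZ_add, ih]

lemma eZ_natmul (M : ℕ) (c : ℤ) (k : ℕ) : eZ M (c * (k : ℤ)) = (eZ M c) ^ k := by
  induction k with
  | zero => simp [eZ_zero]
  | succ k ih =>
    have h : c * ((k + 1 : ℕ) : ℤ) = c * (k : ℤ) + c := by push_cast; ring
    rw [h, eZ_add, ih, pow_succ]

lemma eZ_mul_self (M : ℕ) [NeZero M] (k : ℤ) : eZ M ((M : ℤ) * k) = 1 := by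
  have hM : (M : ℂ) ≠ 0 := Nat.cast_ne_zero.2 (NeZero.ne M)
  rw [eZ]
  have h : 2 * (Real.pi : ℂ) * Complex.I * (((M : ℤ) * k : ℤ) : ℂ) / (M : ℂ)
      = (k : ℂ) * (2 * (Real.pi : ℂ) * Complex.I) := by
    push_cast
    field_simp
  rw [h, Complex.exp_int_mul_two_pi_mul_I]

lemma eZ_eq_one_of_dvd (M : ℕ) [NeZero M] {c : ℤ} (h : (M : ℤ) ∣ c) : eZ M c = 1 := by
  obtain ⟨k, rfl⟩ := h
  exact eZ_mul_self M k

lemma eZ_ne_one_of_not_dvd (M : ℕ) [NeZero M] {c : ℤ} (h : ¬ (M : ℤ) ∣ c) : eZ M c ≠ 1 := by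
  intro hone
  apply h
  rw [eZ, Complex.exp_eq_one_iff] at hone
  obtain ⟨m, hm⟩ := hone
  have hM : (M : ℂ) ≠ 0 := Nat.cast_ne_zero.2 (NeZero.ne M)
  have h2 : (c : ℂ) = (m : ℂ) * (M : ℂ) := by
    have h2pi : (2 * (Real.pi : ℂ) * Complex.I) ≠ 0 := Complex.two_pi_I_ne_zero
    field_simp at hm
    have key : (2 * (Real.pi : ℂ) * Complex.I) * (c : ℂ)
        = (2 * (Real.pi : ℂ) * Complex.I) * ((m : ℂ) * (M : ℂ)) := by
      rw [hm]; ring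
    exact mul_left_cancel₀ h2pi key
  have h3 : (c : ℂ) = (((M : ℤ) * m : ℤ) : ℂ) := by push_cast; rw [h2]; ring
  have hc : c = (M : ℤ) * m := by exact_mod_cast h3
  exact ⟨m, hc⟩

lemma sum_eZ_mul_val (dt : ℕ) [NeZero dt] (c : ℤ) :
    ∑ b : ZMod dt, eZ dt (c * ((b.val : ℕ) : ℤ))
      = if (dt : ℤ) ∣ c then (dt : ℂ) else 0 := by
  have hrw : ∀ b : ZMod dt, eZ dt (c * ((b.val : ℕ) : ℤ)) = (eZ dt c) ^ b.val :=
    fun b => eZ_natmul dt c b.val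
  have hbij : ∑ b : ZMod dt, (eZ dt c) ^ b.val = ∑ k ∈ Finset.range dt, (eZ dt c) ^ k := by
    refine Finset.sum_nbij' (fun b : ZMod dt => b.val) (fun k : ℕ => (k : ZMod dt))
      ?_ ?_ ?_ ?_ ?_
    · intro b _; exact Finset.mem_range.2 (ZMod.val_lt b)
    · intro k _; exact Finset.mem_univ _
    · intro b _; simp [ZMod.natCast_val]
    · intro k hk; exact ZMod.val_cast_of_lt (Finset.mem_range.1 hk)
    · intro b _; rfl
  simp only [hrw, hbij]
  by_cases h : (dt : ℤ) ∣ c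
  · rw [if_pos h, eZ_eq_one_of_dvd dt h]
    simp
  · have hne : eZ dt c ≠ 1 := eZ_ne_one_of_not_dvd dt h
    have hpow : (eZ dt c) ^ dt = 1 := by
      rw [← eZ_natmul, mul_comm]
      exact eZ_mul_self dt c
    rw [if_neg h, geom_sum_eq hne, hpow]
    simp

/-- Inverse of the pairing map. -/
def pairFrom (n : ℕ) {A : Type*} (p : Fin n → A × A) (j : Fin (2 * n)) : A :=
  if j.val % 2 = 0 then (p ⟨j.val / 2, by have := j.isLt; omega⟩).1
  else (p ⟨j.val / 2, by have := j.isLt; omega⟩).2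

lemma pairFrom_even (n : ℕ) {A : Type*} (p : Fin n → A × A) (i : Fin n) (j : Fin (2 * n))
    (hj : j.val = 2 * i.val) : pairFrom n p j = (p i).1 := by
  have h : j.val % 2 = 0 := by omega
  rw [pairFrom, if_pos h]
  exact congrArg (fun t : Fin n => (p t).1) (Fin.ext (show j.val / 2 = i.val by omega))

lemma pairFrom_odd (n : ℕ) {A : Type*} (p : Fin n → A × A) (i : Fin n) (j : Fin (2 * n))
    (hj : j.val = 2 * i.val + 1) : pairFrom n p j = (p i).2 := by
  have h : ¬ (j.val % 2 = 0) := by omega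
  rw [pairFrom, if_neg h]
  exact congrArg (fun t : Fin n => (p t).2) (Fin.ext (show j.val / 2 = i.val by omega))

/-- Pair up coordinates `(2i, 2i+1)` of a function on `Fin (2n)`. -/
def pairEquiv (n : ℕ) (A : Type*) : (Fin (2 * n) → A) ≃ (Fin n → A × A) where
  toFun w i := (w ⟨2 * i.val, by have := i.isLt; omega⟩,
                w ⟨2 * i.val + 1, by have := i.isLt; omega⟩)
  invFun := pairFrom n
  left_inv w := by
    funext j
    rcases Nat.even_or_odd j.val with he | ho
    · obtain ⟨m, hm⟩ := he
      have hmlt : m < n := by have := j.isLt; omega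
      have hj : j.val = 2 * (⟨m, hmlt⟩ : Fin n).val := by simpa using by omega
      rw [pairFrom_even n _ ⟨m, hmlt⟩ j hj]
      exact congrArg w (Fin.ext (show 2 * m = j.val by omega))
    · obtain ⟨m, hm⟩ := ho
      have hmlt : m < n := by have := j.isLt; omega
      have hj : j.val = 2 * (⟨m, hmlt⟩ : Fin n).val + 1 := by simpa using by omega
      rw [pairFrom_odd n _ ⟨m, hmlt⟩ j hj]
      exact congrArg w (Fin.ext (show 2 * m + 1 = j.val by omega))
  right_inv p := by
    funext i
    refine Prod.ext ?_ ?_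
    · exact pairFrom_even n p i _ rfl
    · exact pairFrom_odd n p i _ rfl

/-- Gauss sum over an even unimodular lattice `L = H^{⊕n}` of rank `2n`:
for `gcd(b', dt) = 1`, `Σ_{w ∈ L/dtL} ζ_{dt}^{-(b'/2)(w·w)} = dt^n`. -/
theorem gauss_sum_hyperbolic (n dt : ℕ) [NeZero dt] (hn : 0 < n)
    (b' : ℤ) (hco : IsCoprime b' (dt : ℤ)) :
    ∑ w : Fin (2 * n) → ZMod dt,
      eZ dt (-(b' * (hypB n (fun i => ((w i).val : ℤ)) (fun i => ((w i).val : ℤ)) / 2)))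
      = (dt : ℂ) ^ n := by
  have step1 : ∀ w : Fin (2 * n) → ZMod dt,
      eZ dt (-(b' * (hypB n (fun i => ((w i).val : ℤ)) (fun i => ((w i).val : ℤ)) / 2)))
      = ∏ i : Fin n,
          eZ dt (-(b' * (((w ⟨2 * i.val, by have := i.isLt; omega⟩).val : ℤ)
            * ((w ⟨2 * i.val + 1, by have := i.isLt; omega⟩).val : ℤ)))) := by
    intro w
    set x : Fin (2 * n) → ℤ := fun i => ((w i).val : ℤ) with hx
    have hB : hypB n x x = 2 * ∑ i : Fin n,
        x ⟨2 * i.val, by have := i.isLt; omega⟩ * x ⟨2 * i.val + 1, by have := i.isLt; omega⟩ := by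
      rw [hypB, Finset.mul_sum]
      exact Finset.sum_congr rfl fun i _ => by ring
    have hdiv : hypB n x x / 2 = ∑ i : Fin n,
        x ⟨2 * i.val, by have := i.isLt; omega⟩ * x ⟨2 * i.val + 1, by have := i.isLt; omega⟩ := by
      rw [hB]; exact Int.mul_ediv_cancel_left _ two_ne_zero
    rw [hdiv, Finset.mul_sum, ← Finset.sum_neg_distrib, eZ_sum]
  calc ∑ w : Fin (2 * n) → ZMod dt,
        eZ dt (-(b' * (hypB n (fun i => ((w i).val : ℤ)) (fun i => ((w i).val : ℤ)) / 2)))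
      = ∑ p : Fin n → ZMod dt × ZMod dt,
          ∏ i : Fin n, eZ dt (-(b' * (((p i).1.val : ℤ) * ((p i).2.val : ℤ)))) := by
        refine Fintype.sum_equiv (pairEquiv n (ZMod dt)) _ _ fun w => ?_
        rw [step1 w]
        exact Finset.prod_congr rfl fun i _ => rfl
    _ = ∏ i : Fin n, ∑ q : ZMod dt × ZMod dt,
          eZ dt (-(b' * ((q.1.val : ℤ) * (q.2.val : ℤ)))) := by
        rw [Fintype.prod_sum]
    _ = ∏ _i : Fin n, (dt : ℂ) := by
        refine Finset.prod_congr rfl fun i _ => ?_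
        rw [Fintype.sum_prod_type]
        have inner : ∀ a : ZMod dt,
            ∑ b : ZMod dt, eZ dt (-(b' * ((a.val : ℤ) * (b.val : ℤ))))
            = if a = 0 then (dt : ℂ) else 0 := by
          intro a
          have hc : ∀ b : ZMod dt, -(b' * ((a.val : ℤ) * (b.val : ℤ)))
              = (-(b' * (a.val : ℤ))) * (b.val : ℤ) := fun b => by ring
          simp only [hc]
          rw [sum_eZ_mul_val]
          have hiff : ((dt : ℤ) ∣ -(b' * (a.val : ℤ))) ↔ (a = 0) := by
            rw [dvd_neg]
            constructor
            · intro hdvd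
              have h3 : (dt : ℤ) ∣ (a.val : ℤ) := (hco.symm).dvd_of_dvd_mul_left hdvd
              have h4 : (dt : ℕ) ∣ a.val := Int.ofNat_dvd.mp h3
              have h5 : a.val = 0 := Nat.eq_zero_of_dvd_of_lt h4 (ZMod.val_lt a)
              exact (ZMod.val_eq_zero a).mp h5
            · rintro rfl
              simp
          simp only [hiff]
        rw [Finset.sum_congr rfl fun a _ => inner a]
        simp
    _ = (dt : ℂ) ^ n := by simp
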